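/- arXiv:2409.19978 — 2 statements merged into one kernel-verified Lean document; each statement's English description precedes it below -/
import Mathlib

section
/- Let D ∈ 𝕋_m^q(Q) with superdiagonal values d_0 = 1, d_1, …, d_{Q−1} ∈ ℝ (so D_{ij} = d_{j−i} when 0 ≤ j−i ≤ Q−1 and j ≥ q, and D_{ij} = 0 otherwise). Let A ∈ ℝ^{n×n}, B ∈ ℝ^{n×k}, let x_0, …, x_m ∈ ℝ^n and u_0, …, u_{m−1} ∈ ℝ^k, and define the matrices X, Y ∈ ℝ^{n×m}, U ∈ ℝ^{k×m} whose first q columns are zero and whose column t (for q ≤ t ≤ m−1) equals x_t, x_{t+1}, u_t respectively. Then YD = AX + BU holds if and only if for every t with q ≤ t ≤ m−1 one has x_{t+1} = A x_t + B u_t − Σ_{k=1}^{min(Q−1, t−q)} d_k x_{t+1−k}. That is, the time-invariant non-Markovian state-space model is equivalent to an autoregressive exogenous (ARX) recursion. -/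
open Matrix

lemma key_sum (m q Q : ℕ) (hQ : 1 ≤ Q) (d : ℕ → ℝ) (hd0 : d 0 = 1) (y : ℕ → ℝ)
    (j : ℕ) (hj : q ≤ j) (hjm : j < m) :
    ∑ i ∈ Finset.range m,
      (if q ≤ i then y i else 0) * (if i ≤ j ∧ j < i + Q ∧ q ≤ j then d (j - i) else 0)
    = y j + ∑ κ ∈ Finset.Icc 1 (min (Q - 1) (j - q)), d κ * y (j - κ) := by
  have hstep1 : ∑ i ∈ Finset.range m,
      (if q ≤ i then y i else 0) * (if i ≤ j ∧ j < i + Q ∧ q ≤ j then d (j - i) else 0)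
      = ∑ i ∈ Finset.Icc (max q (j + 1 - Q)) j, d (j - i) * y i := by
    rw [← Finset.sum_subset (s₁ := Finset.Icc (max q (j + 1 - Q)) j)
      (by intro i hi; simp only [Finset.mem_Icc] at hi; simp only [Finset.mem_range]; omega)
      (by intro i hi hni
          simp only [Finset.mem_Icc] at hni
          split_ifs with h1 h2
          · exfalso; omega
          all_goals ring)]
    refine Finset.sum_congr rfl ?_
    intro i hi
    simp only [Finset.mem_Icc] at hi
    rw [if_pos (by omega), if_pos (by omega)]
    ring
  rw [hstep1]
  have hstep2 : ∑ i ∈ Finset.Icc (max q (j + 1 - Q)) j, d (j - i) * y i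
      = ∑ κ ∈ Finset.Icc 0 (min (Q - 1) (j - q)), d κ * y (j - κ) := by
    refine Finset.sum_nbij' (fun i => j - i) (fun κ => j - κ) ?_ ?_ ?_ ?_ ?_
    · intro i hi; simp only [Finset.mem_Icc] at *; omega
    · intro κ hκ; simp only [Finset.mem_Icc] at *; omega
    · intro i hi; simp only [Finset.mem_Icc] at hi; omega
    · intro κ hκ; simp only [Finset.mem_Icc] at hκ; omega
    · intro i hi; simp only [Finset.mem_Icc] at hi
      have h1 : j - (j - i) = i := by omega
      rw [h1]
  rw [hstep2]
  have h0 : Finset.Icc 0 (min (Q - 1) (j - q)) = insert 0 (Finset.Icc 1 (min (Q - 1) (j - q))) := by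
    ext κ; simp only [Finset.mem_Icc, Finset.mem_insert]; omega
  rw [h0, Finset.sum_insert (by simp), hd0, Nat.sub_zero, one_mul]

/-- Let `D ∈ 𝕋_m^q(Q)` have superdiagonal values `d 0 = 1, d 1, …, d (Q-1)`, so that
`D i j = d (j - i)` when `0 ≤ j - i ≤ Q - 1` and `j ≥ q`, and `D i j = 0` otherwise.
With data matrices `X, Y, U` whose first `q` columns vanish and whose column `t`
(`q ≤ t ≤ m-1`) is `x t`, `x (t+1)`, `u t` respectively, the time-invariant
non-Markovian state-space model `Y D = A X + B U` holds if and only if the ARX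
recursion `x (t+1) = A x t + B u t - ∑_{κ=1}^{min (Q-1) (t-q)} d κ • x (t+1-κ)`
holds for every `q ≤ t ≤ m - 1`. -/
theorem stmt_3 (n k m q Q : ℕ) (hQ : 1 ≤ Q) (hqQ : q ≤ Q) (hQm : Q ≤ m)
    (d : ℕ → ℝ) (hd0 : d 0 = 1)
    (A : Matrix (Fin n) (Fin n) ℝ) (B : Matrix (Fin n) (Fin k) ℝ)
    (x : ℕ → Fin n → ℝ) (u : ℕ → Fin k → ℝ)
    (D : Matrix (Fin m) (Fin m) ℝ)
    (hD : ∀ i j : Fin m, D i j =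
      if (i : ℕ) ≤ (j : ℕ) ∧ (j : ℕ) < (i : ℕ) + Q ∧ q ≤ (j : ℕ)
      then d ((j : ℕ) - (i : ℕ)) else 0)
    (X Y : Matrix (Fin n) (Fin m) ℝ) (U : Matrix (Fin k) (Fin m) ℝ)
    (hX : ∀ (a : Fin n) (t : Fin m), X a t = if q ≤ (t : ℕ) then x (t : ℕ) a else 0)
    (hY : ∀ (a : Fin n) (t : Fin m), Y a t = if q ≤ (t : ℕ) then x ((t : ℕ) + 1) a else 0)
    (hU : ∀ (b : Fin k) (t : Fin m), U b t = if q ≤ (t : ℕ) then u (t : ℕ) b else 0) :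
    Y * D = A * X + B * U ↔
      ∀ t : Fin m, q ≤ (t : ℕ) →
        x ((t : ℕ) + 1) =
          A.mulVec (x (t : ℕ)) + B.mulVec (u (t : ℕ)) -
            ∑ κ ∈ Finset.Icc 1 (min (Q - 1) ((t : ℕ) - q)), d κ • x ((t : ℕ) + 1 - κ) := by
  -- LHS entry computation
  have hLHS : ∀ (a : Fin n) (t : Fin m), q ≤ (t : ℕ) →
      (Y * D) a t = x ((t : ℕ) + 1) a +
        ∑ κ ∈ Finset.Icc 1 (min (Q - 1) ((t : ℕ) - q)), d κ * x ((t : ℕ) + 1 - κ) a := by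
    intro a t ht
    rw [Matrix.mul_apply]
    simp only [hY, hD]
    rw [Fin.sum_univ_eq_sum_range (fun i =>
      (if q ≤ i then x (i + 1) a else 0) *
      (if i ≤ (t : ℕ) ∧ (t : ℕ) < i + Q ∧ q ≤ (t : ℕ) then d ((t : ℕ) - i) else 0))]
    rw [key_sum m q Q hQ d hd0 (fun i => x (i + 1) a) (t : ℕ) ht t.isLt]
    congr 1
    refine Finset.sum_congr rfl ?_
    intro κ hκ
    simp only [Finset.mem_Icc] at hκ
    have : (t : ℕ) - κ + 1 = (t : ℕ) + 1 - κ := by omega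
    rw [this]
  have hRHS : ∀ (a : Fin n) (t : Fin m), q ≤ (t : ℕ) →
      (A * X + B * U) a t = A.mulVec (x (t : ℕ)) a + B.mulVec (u (t : ℕ)) a := by
    intro a t ht
    simp only [Matrix.add_apply, Matrix.mul_apply, hX, hU, if_pos ht,
      Matrix.mulVec, dotProduct]
  constructor
  · intro h t ht
    funext a
    have he : (Y * D) a t = (A * X + B * U) a t := by rw [h]
    rw [hLHS a t ht, hRHS a t ht] at he
    simp only [Pi.sub_apply, Pi.add_apply, Finset.sum_apply, Pi.smul_apply, smul_eq_mul]
    linarith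
  · intro h
    ext a t
    by_cases ht : q ≤ (t : ℕ)
    · rw [hLHS a t ht, hRHS a t ht]
      have he := congrFun (h t ht) a
      simp only [Pi.sub_apply, Pi.add_apply, Finset.sum_apply, Pi.smul_apply, smul_eq_mul] at he
      linarith
    · have hD0 : ∀ i : Fin m, D i t = 0 := by
        intro i; rw [hD, if_neg]; intro hc; exact ht hc.2.2
      simp [Matrix.add_apply, Matrix.mul_apply, hX, hU, hD0, if_neg ht]
end

section
/- The loss f is Lipschitz smooth on ℝ^{n×n} × ℝ^{n×k} × ℝ^{m×m}: its gradient map G(A,B,D) = ( −2 Σ_μ E_μ X_μᵀ, −2 Σ_μ E_μ U_μᵀ, 2 Σ_μ Y_μᵀ E_μ ), where E_μ = Y_μ D − (A X_μ + B U_μ), satisfies ‖G(θ') − G(θ)‖ ≤ L ‖θ' − θ‖ for all θ, θ', with the explicit Lipschitz constant L = 2 Σ_{μ=0}^{N−1} ( ‖X_μ‖² + ‖U_μ‖² + ‖Y_μ‖² ). -/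
open Matrix

attribute [local instance] Matrix.frobeniusSeminormedAddCommGroup Matrix.frobeniusNormedSpace

private lemma trace_eq_sq_norm {a b : ℕ} (M : Matrix (Fin a) (Fin b) ℝ) :
    (Mᵀ * M).trace = ‖M‖ ^ 2 := by
  rw [Matrix.frobenius_norm_def]
  have hs : (0:ℝ) ≤ ∑ i, ∑ j, ‖M i j‖ ^ (2:ℝ) := by positivity
  rw [← Real.rpow_natCast ((∑ i, ∑ j, ‖M i j‖ ^ (2:ℝ)) ^ (1/2:ℝ)) 2, ← Real.rpow_mul hs]
  norm_num
  simp [Matrix.trace, Matrix.diag, Matrix.mul_apply, Real.rpow_natCast]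
  rw [Finset.sum_comm]
  congr 1; ext i; congr 1; ext j
  ring

private lemma mink3 {N : ℕ} (f g h : Fin N → ℝ) :
    Real.sqrt ((∑ μ, f μ)^2 + (∑ μ, g μ)^2 + (∑ μ, h μ)^2) ≤
      ∑ μ, Real.sqrt (f μ^2 + g μ^2 + h μ^2) := by
  have key := norm_sum_le (E := EuclideanSpace ℝ (Fin 3)) Finset.univ
    (fun μ => (WithLp.equiv 2 _).symm ![f μ, g μ, h μ])
  have hc : ∀ i, (∑ μ, (WithLp.equiv 2 (Fin 3 → ℝ)).symm ![f μ, g μ, h μ]) i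
      = ∑ μ, (![f μ, g μ, h μ] : Fin 3 → ℝ) i := by
    intro i
    induction (Finset.univ : Finset (Fin N)) using Finset.induction with
    | empty => rfl
    | insert _ _ hx ih => rw [Finset.sum_insert hx, Finset.sum_insert hx, ← ih]; rfl
  simp only [WithLp.equiv_symm_apply] at hc key
  simp only [EuclideanSpace.norm_eq, Fin.sum_univ_three, PiLp.toLp_apply,
    Matrix.cons_val_zero, Matrix.cons_val_one, Matrix.head_cons, Real.norm_eq_abs, sq_abs,
    hc] at key
  exact key

private lemma cs3 (x u y a b d : ℝ) :
    y*d + x*a + u*b ≤ Real.sqrt (x^2+u^2+y^2) * Real.sqrt (a^2+b^2+d^2) := by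
  have h2 : (y*d + x*a + u*b)^2 ≤ (x^2+u^2+y^2)*(a^2+b^2+d^2) := by
    nlinarith [sq_nonneg (x*b-u*a), sq_nonneg (x*d-y*a), sq_nonneg (u*d-y*b)]
  calc y*d+x*a+u*b ≤ |y*d+x*a+u*b| := le_abs_self _
    _ = Real.sqrt ((y*d+x*a+u*b)^2) := (Real.sqrt_sq_eq_abs _).symm
    _ ≤ Real.sqrt ((x^2+u^2+y^2)*(a^2+b^2+d^2)) := Real.sqrt_le_sqrt h2
    _ = _ := Real.sqrt_mul (by positivity) _

/-- Lipschitz smoothness of the loss `f(A,B,D) = ∑_μ ‖Y_μ D - (A X_μ + B U_μ)‖²`: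
its gradient map `G(A,B,D) = (-2 ∑_μ E_μ X_μᵀ, -2 ∑_μ E_μ U_μᵀ, 2 ∑_μ Y_μᵀ E_μ)`
(with `E_μ = Y_μ D - (A X_μ + B U_μ)`) satisfies `‖G θ' - G θ‖ ≤ L ‖θ' - θ‖` for
all `θ, θ'`, with `L = 2 ∑_μ (‖X_μ‖² + ‖U_μ‖² + ‖Y_μ‖²)`.  Here `‖M‖² = tr(Mᵀ M)`
is the squared Frobenius norm and the norm of a tuple is the square root of the
sum of the squared Frobenius norms of its components. -/
theorem stmt_10 (n k m N : ℕ)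
    (X Y : Fin N → Matrix (Fin n) (Fin m) ℝ) (U : Fin N → Matrix (Fin k) (Fin m) ℝ)
    (G : Matrix (Fin n) (Fin n) ℝ × Matrix (Fin n) (Fin k) ℝ × Matrix (Fin m) (Fin m) ℝ →
      Matrix (Fin n) (Fin n) ℝ × Matrix (Fin n) (Fin k) ℝ × Matrix (Fin m) (Fin m) ℝ)
    (hG : ∀ θ, G θ =
      ((-2 : ℝ) • ∑ μ : Fin N, (Y μ * θ.2.2 - (θ.1 * X μ + θ.2.1 * U μ)) * (X μ)ᵀ,
       (-2 : ℝ) • ∑ μ : Fin N, (Y μ * θ.2.2 - (θ.1 * X μ + θ.2.1 * U μ)) * (U μ)ᵀ,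
       (2 : ℝ) • ∑ μ : Fin N, (Y μ)ᵀ * (Y μ * θ.2.2 - (θ.1 * X μ + θ.2.1 * U μ)))) :
    ∀ θ θ' : Matrix (Fin n) (Fin n) ℝ × Matrix (Fin n) (Fin k) ℝ × Matrix (Fin m) (Fin m) ℝ,
      Real.sqrt
        ((((G θ').1 - (G θ).1)ᵀ * ((G θ').1 - (G θ).1)).trace +
          (((G θ').2.1 - (G θ).2.1)ᵀ * ((G θ').2.1 - (G θ).2.1)).trace +
          (((G θ').2.2 - (G θ).2.2)ᵀ * ((G θ').2.2 - (G θ).2.2)).trace) ≤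
      (2 * ∑ μ : Fin N,
          (((X μ)ᵀ * X μ).trace + ((U μ)ᵀ * U μ).trace + ((Y μ)ᵀ * Y μ).trace)) *
        Real.sqrt
          (((θ'.1 - θ.1)ᵀ * (θ'.1 - θ.1)).trace +
            ((θ'.2.1 - θ.2.1)ᵀ * (θ'.2.1 - θ.2.1)).trace +
            ((θ'.2.2 - θ.2.2)ᵀ * (θ'.2.2 - θ.2.2)).trace) := by
  intro θ θ'
  obtain ⟨A, B, D⟩ := θ
  obtain ⟨A', B', D'⟩ := θ'
  simp only [hG, trace_eq_sq_norm]
  set Eδ : Fin N → Matrix (Fin n) (Fin m) ℝ :=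
    fun μ => Y μ * (D' - D) - ((A' - A) * X μ + (B' - B) * U μ) with hEδ
  have h1 : ((-2:ℝ) • ∑ μ : Fin N, (Y μ * D' - (A' * X μ + B' * U μ)) * (X μ)ᵀ) -
      ((-2:ℝ) • ∑ μ : Fin N, (Y μ * D - (A * X μ + B * U μ)) * (X μ)ᵀ) =
      (-2:ℝ) • ∑ μ : Fin N, Eδ μ * (X μ)ᵀ := by
    rw [← smul_sub, ← Finset.sum_sub_distrib]
    congr 1
    refine Finset.sum_congr rfl fun μ _ => ?_
    simp only [hEδ, Matrix.sub_mul, Matrix.add_mul, Matrix.mul_sub, Matrix.mul_add]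
    abel
  have h2 : ((-2:ℝ) • ∑ μ : Fin N, (Y μ * D' - (A' * X μ + B' * U μ)) * (U μ)ᵀ) -
      ((-2:ℝ) • ∑ μ : Fin N, (Y μ * D - (A * X μ + B * U μ)) * (U μ)ᵀ) =
      (-2:ℝ) • ∑ μ : Fin N, Eδ μ * (U μ)ᵀ := by
    rw [← smul_sub, ← Finset.sum_sub_distrib]
    congr 1
    refine Finset.sum_congr rfl fun μ _ => ?_
    simp only [hEδ, Matrix.sub_mul, Matrix.add_mul, Matrix.mul_sub, Matrix.mul_add]
    abel
  have h3 : ((2:ℝ) • ∑ μ : Fin N, (Y μ)ᵀ * (Y μ * D' - (A' * X μ + B' * U μ))) -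
      ((2:ℝ) • ∑ μ : Fin N, (Y μ)ᵀ * (Y μ * D - (A * X μ + B * U μ))) =
      (2:ℝ) • ∑ μ : Fin N, (Y μ)ᵀ * Eδ μ := by
    rw [← smul_sub, ← Finset.sum_sub_distrib]
    congr 1
    refine Finset.sum_congr rfl fun μ _ => ?_
    simp only [hEδ, Matrix.sub_mul, Matrix.add_mul, Matrix.mul_sub, Matrix.mul_add]
    abel
  rw [h1, h2, h3]
  set s : ℝ := Real.sqrt (‖A' - A‖^2 + ‖B' - B‖^2 + ‖D' - D‖^2) with hsdef
  have hs0 : 0 ≤ s := Real.sqrt_nonneg _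
  -- per-μ bound on the error matrix
  have he : ∀ μ : Fin N, ‖Eδ μ‖ ≤ Real.sqrt (‖X μ‖^2 + ‖U μ‖^2 + ‖Y μ‖^2) * s := by
    intro μ
    have t1 : ‖Eδ μ‖ ≤ ‖Y μ‖*‖D' - D‖ + ‖X μ‖*‖A' - A‖ + ‖U μ‖*‖B' - B‖ := by
      calc ‖Eδ μ‖ ≤ ‖Y μ * (D' - D)‖ + ‖(A' - A) * X μ + (B' - B) * U μ‖ := norm_sub_le _ _
        _ ≤ ‖Y μ * (D' - D)‖ + (‖(A' - A) * X μ‖ + ‖(B' - B) * U μ‖) := by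
            gcongr; exact norm_add_le _ _
        _ ≤ ‖Y μ‖*‖D' - D‖ + (‖A' - A‖*‖X μ‖ + ‖B' - B‖*‖U μ‖) := by
            gcongr <;> exact Matrix.frobenius_norm_mul _ _
        _ = ‖Y μ‖*‖D' - D‖ + ‖X μ‖*‖A' - A‖ + ‖U μ‖*‖B' - B‖ := by ring
    exact t1.trans (cs3 ‖X μ‖ ‖U μ‖ ‖Y μ‖ ‖A' - A‖ ‖B' - B‖ ‖D' - D‖)
  -- norm bounds for the three gradient components
  have hP : ‖(-2:ℝ) • ∑ μ : Fin N, Eδ μ * (X μ)ᵀ‖ ≤ ∑ μ : Fin N, 2*(‖Eδ μ‖*‖X μ‖) := by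
    calc ‖(-2:ℝ) • ∑ μ : Fin N, Eδ μ * (X μ)ᵀ‖ = 2*‖∑ μ : Fin N, Eδ μ * (X μ)ᵀ‖ := by
          rw [norm_smul]; norm_num
      _ ≤ 2*∑ μ : Fin N, ‖Eδ μ * (X μ)ᵀ‖ := by
          gcongr; exact norm_sum_le _ _
      _ ≤ 2*∑ μ : Fin N, ‖Eδ μ‖*‖X μ‖ := by
          gcongr with μ
          calc ‖Eδ μ * (X μ)ᵀ‖ ≤ ‖Eδ μ‖*‖(X μ)ᵀ‖ := Matrix.frobenius_norm_mul _ _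
            _ = ‖Eδ μ‖*‖X μ‖ := by rw [Matrix.frobenius_norm_transpose]
      _ = ∑ μ : Fin N, 2*(‖Eδ μ‖*‖X μ‖) := Finset.mul_sum _ _ _
  have hQ : ‖(-2:ℝ) • ∑ μ : Fin N, Eδ μ * (U μ)ᵀ‖ ≤ ∑ μ : Fin N, 2*(‖Eδ μ‖*‖U μ‖) := by
    calc ‖(-2:ℝ) • ∑ μ : Fin N, Eδ μ * (U μ)ᵀ‖ = 2*‖∑ μ : Fin N, Eδ μ * (U μ)ᵀ‖ := by
          rw [norm_smul]; norm_num
      _ ≤ 2*∑ μ : Fin N, ‖Eδ μ * (U μ)ᵀ‖ := by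
          gcongr; exact norm_sum_le _ _
      _ ≤ 2*∑ μ : Fin N, ‖Eδ μ‖*‖U μ‖ := by
          gcongr with μ
          calc ‖Eδ μ * (U μ)ᵀ‖ ≤ ‖Eδ μ‖*‖(U μ)ᵀ‖ := Matrix.frobenius_norm_mul _ _
            _ = ‖Eδ μ‖*‖U μ‖ := by rw [Matrix.frobenius_norm_transpose]
      _ = ∑ μ : Fin N, 2*(‖Eδ μ‖*‖U μ‖) := Finset.mul_sum _ _ _
  have hR : ‖(2:ℝ) • ∑ μ : Fin N, (Y μ)ᵀ * Eδ μ‖ ≤ ∑ μ : Fin N, 2*(‖Eδ μ‖*‖Y μ‖) := by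
    calc ‖(2:ℝ) • ∑ μ : Fin N, (Y μ)ᵀ * Eδ μ‖ = 2*‖∑ μ : Fin N, (Y μ)ᵀ * Eδ μ‖ := by
          rw [norm_smul]; norm_num
      _ ≤ 2*∑ μ : Fin N, ‖(Y μ)ᵀ * Eδ μ‖ := by
          gcongr; exact norm_sum_le _ _
      _ ≤ 2*∑ μ : Fin N, ‖Eδ μ‖*‖Y μ‖ := by
          gcongr with μ
          calc ‖(Y μ)ᵀ * Eδ μ‖ ≤ ‖(Y μ)ᵀ‖*‖Eδ μ‖ := Matrix.frobenius_norm_mul _ _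
            _ = ‖Eδ μ‖*‖Y μ‖ := by rw [Matrix.frobenius_norm_transpose, mul_comm]
      _ = ∑ μ : Fin N, 2*(‖Eδ μ‖*‖Y μ‖) := Finset.mul_sum _ _ _
  -- assemble
  calc Real.sqrt (‖(-2:ℝ) • ∑ μ : Fin N, Eδ μ * (X μ)ᵀ‖^2 +
        ‖(-2:ℝ) • ∑ μ : Fin N, Eδ μ * (U μ)ᵀ‖^2 + ‖(2:ℝ) • ∑ μ : Fin N, (Y μ)ᵀ * Eδ μ‖^2)
      ≤ Real.sqrt ((∑ μ : Fin N, 2*(‖Eδ μ‖*‖X μ‖))^2 +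
          (∑ μ : Fin N, 2*(‖Eδ μ‖*‖U μ‖))^2 + (∑ μ : Fin N, 2*(‖Eδ μ‖*‖Y μ‖))^2) := by
        apply Real.sqrt_le_sqrt
        gcongr
    _ ≤ ∑ μ : Fin N, Real.sqrt ((2*(‖Eδ μ‖*‖X μ‖))^2 + (2*(‖Eδ μ‖*‖U μ‖))^2 +
          (2*(‖Eδ μ‖*‖Y μ‖))^2) := mink3 _ _ _
    _ ≤ ∑ μ : Fin N, 2*(‖X μ‖^2 + ‖U μ‖^2 + ‖Y μ‖^2)*s := by
        refine Finset.sum_le_sum fun μ _ => ?_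
        have hr0 : (0:ℝ) ≤ Real.sqrt (‖X μ‖^2 + ‖U μ‖^2 + ‖Y μ‖^2) := Real.sqrt_nonneg _
        have hrsq : Real.sqrt (‖X μ‖^2 + ‖U μ‖^2 + ‖Y μ‖^2)^2
            = ‖X μ‖^2 + ‖U μ‖^2 + ‖Y μ‖^2 := Real.sq_sqrt (by positivity)
        have heq : (2*(‖Eδ μ‖*‖X μ‖))^2 + (2*(‖Eδ μ‖*‖U μ‖))^2 + (2*(‖Eδ μ‖*‖Y μ‖))^2
            = (2*‖Eδ μ‖)^2 * (‖X μ‖^2 + ‖U μ‖^2 + ‖Y μ‖^2) := by ring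
        rw [heq, Real.sqrt_mul (by positivity), Real.sqrt_sq (by positivity)]
        calc 2*‖Eδ μ‖ * Real.sqrt (‖X μ‖^2 + ‖U μ‖^2 + ‖Y μ‖^2)
            ≤ 2*(Real.sqrt (‖X μ‖^2 + ‖U μ‖^2 + ‖Y μ‖^2) * s) *
              Real.sqrt (‖X μ‖^2 + ‖U μ‖^2 + ‖Y μ‖^2) := by gcongr; exact he μ
          _ = 2*(Real.sqrt (‖X μ‖^2 + ‖U μ‖^2 + ‖Y μ‖^2)^2)*s := by ring
          _ = 2*(‖X μ‖^2 + ‖U μ‖^2 + ‖Y μ‖^2)*s := by rw [hrsq]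
    _ = (2 * ∑ μ : Fin N, (‖X μ‖^2 + ‖U μ‖^2 + ‖Y μ‖^2)) * s := by
        rw [Finset.mul_sum, ← Finset.sum_mul]
end
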